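/- Let F be a factorization forest of a word w. Every iterable node I of F is a descendant of a middle child of exactly one basis of F, i.e. there is a unique idempotent node B in the dependency of the root such that I is a descendant of a middle child of B. -/

import Mathlib

/-!
Walk down from the root along the path to the iterable node and stop at the first child that is
neither the first nor the last one. The path walked so far is a dependency path, and the node
reached has a middle child, so it has at least three children and is idempotent: a basis. It is
the only one, because a dependency path never enters a middle child, so of two bases whose middle
children lie on the path, neither can lie strictly below the other.
-/

inductive FForest (A : Type) : Type
  | leaf (a : A) : FForest A
  | node (children : List (FForest A)) : FForest A

namespace FForest

variable {A : Type} {M : Type} [Monoid M]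

def wordOf : FForest A → List A
  | .leaf a => [a]
  | .node l => (l.attach.map (fun x => wordOf x.1)).flatten
decreasing_by simp only [FForest.node.sizeOf_spec]; have := List.sizeOf_lt_of_mem x.2; omega

def height : FForest A → ℕ
  | .leaf _ => 1
  | .node l => 1 + (l.attach.map (fun x => height x.1)).foldr max 0
decreasing_by simp only [FForest.node.sizeOf_spec]; have := List.sizeOf_lt_of_mem x.2; omega

def prodOf (μ : A → M) (F : FForest A) : M := ((wordOf F).map μ).prod

inductive Valid (μ : A → M) : FForest A → Prop
  | leaf (a : A) : Valid μ (.leaf a)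
  | binary (F₁ F₂ : FForest A) : Valid μ F₁ → Valid μ F₂ → Valid μ (.node [F₁, F₂])
  | idem (l : List (FForest A)) (e : M) : 3 ≤ l.length → (∀ F ∈ l, Valid μ F) →
      e * e = e → (∀ F ∈ l, prodOf μ F = e) → Valid μ (.node l)

def subtreeAt : FForest A → List ℕ → Option (FForest A)
  | F, [] => some F
  | .leaf _, _ :: _ => none
  | .node l, i :: p =>
      match l[i]? with
      | some c => subtreeAt c p
      | none => none
termination_by F p => p.length

def offsetAt : FForest A → List ℕ → ℕ
  | _, [] => 0
  | .leaf _, _ :: _ => 0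
  | .node l, i :: p =>
      ((l.take i).map (fun c => (wordOf c).length)).sum +
      (match l[i]? with
       | some c => offsetAt c p
       | none => 0)
termination_by F p => p.length

inductive DepPath : FForest A → List ℕ → Prop
  | nil (F : FForest A) : DepPath F []
  | cons (l : List (FForest A)) (i : ℕ) (p : List ℕ) (hi : i < l.length)
      (hd : i = 0 ∨ i = l.length - 1) (h : DepPath l[i] p) : DepPath (.node l) (i :: p)

def IsPath (F : FForest A) (p : List ℕ) : Prop := (subtreeAt F p).isSome

def IterPath (F : FForest A) (p : List ℕ) : Prop :=
  ∃ q i l, p = q ++ [i] ∧ subtreeAt F q = some (.node l) ∧ 1 ≤ i ∧ i + 2 ≤ l.length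

def PartPath (F : FForest A) (p : List ℕ) : Prop := p = [] ∨ IterPath F p

def depOf (F : FForest A) (p : List ℕ) : Set (List ℕ) :=
  {r | ∃ q I, subtreeAt F p = some I ∧ DepPath I q ∧ r = p ++ q}

def frSet (F : FForest A) (p : List ℕ) : Set ℕ :=
  {j | ∃ q I a, subtreeAt F p = some I ∧ DepPath I q ∧
        subtreeAt F (p ++ q) = some (.leaf a) ∧ j = offsetAt F (p ++ q)}

mutual
def frWord : FForest A → List A
  | .leaf a => [a]
  | .node [] => []
  | .node (f :: rest) => frWord f ++ frWordLast rest
def frWordLast : List (FForest A) → List A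
  | [] => []
  | [g] => frWord g
  | _ :: g :: rest => frWordLast (g :: rest)
end

mutual
def frList : FForest A → List ℕ
  | .leaf _ => [0]
  | .node [] => []
  | .node (f :: rest) => frList f ++ (frListLast rest).map (· + (wordOf f).length)
def frListLast : List (FForest A) → List ℕ
  | [] => []
  | [g] => frList g
  | g :: rest => (frListLast rest).map (· + (wordOf g).length)
end

end FForest


/-- `b` is a basis of `F` (w.r.t. `μ`): an idempotent node belonging to the
dependency of the root. -/
def FForest.IsBasis {A M : Type} [Monoid M] (μ : A → M) (F : FForest A)
    (b : List ℕ) : Prop :=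
  FForest.DepPath F b ∧ ∃ (l : List (FForest A)) (e : M),
    FForest.subtreeAt F b = some (.node l) ∧ 3 ≤ l.length ∧
    e * e = e ∧ ∀ c ∈ l, FForest.prodOf μ c = e

namespace FForest

variable {A M : Type} [Monoid M]

def DescendsFromMiddleChild (F : FForest A) (b p : List ℕ) : Prop :=
  ∃ (i : ℕ) (q : List ℕ) (l : List (FForest A)),
    subtreeAt F b = some (.node l) ∧ 1 ≤ i ∧ i + 2 ≤ l.length ∧ p = b ++ i :: q

@[simp]
lemma subtreeAt_nil (F : FForest A) : subtreeAt F [] = some F := by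
  rw [subtreeAt]

lemma subtreeAt_node_cons_eq_some {l : List (FForest A)} {j : ℕ} {p : List ℕ} {G : FForest A} :
    subtreeAt (.node l) (j :: p) = some G ↔ ∃ h : j < l.length, subtreeAt l[j] p = some G := by
  rw [subtreeAt]
  cases hc : l[j]? with
  | none => simp_all
  | some c =>
    obtain ⟨hj, rfl⟩ := List.getElem?_eq_some_iff.mp hc
    simp [hj]

lemma Valid.of_mem {μ : A → M} {l : List (FForest A)} (h : Valid μ (.node l))
    {c : FForest A} (hc : c ∈ l) : Valid μ c := by
  cases h with
  | binary _ _ h₁ h₂ =>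
    simp only [List.mem_cons, List.not_mem_nil, or_false] at hc
    rcases hc with rfl | rfl <;> assumption
  | idem _ _ _ hl _ _ => exact hl c hc

lemma Valid.exists_idempotent {μ : A → M} {l : List (FForest A)} (h : Valid μ (.node l))
    (hl : 3 ≤ l.length) : ∃ e : M, e * e = e ∧ ∀ c ∈ l, prodOf μ c = e := by
  cases h with
  | binary => simp at hl
  | idem _ e _ _ he hprod => exact ⟨e, he, hprod⟩

lemma Valid.subtreeAt {μ : A → M} {F G : FForest A} (hF : Valid μ F) {p : List ℕ}
    (hp : subtreeAt F p = some G) : Valid μ G := by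
  induction p generalizing F with
  | nil => simp_all
  | cons j p ih =>
    cases F with
    | leaf => simp [FForest.subtreeAt] at hp
    | node l =>
      obtain ⟨hj, hp⟩ := subtreeAt_node_cons_eq_some.mp hp
      exact ih (hF.of_mem (l.getElem_mem hj)) hp

lemma DepPath.exists_subtreeAt_of_append {F : FForest A} {b r : List ℕ}
    (h : DepPath F (b ++ r)) : ∃ G, subtreeAt F b = some G ∧ DepPath G r := by
  induction b generalizing F with
  | nil => exact ⟨F, subtreeAt_nil F, h⟩
  | cons j b ih =>
    cases h with
    | cons l _ _ hj _ h =>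
      obtain ⟨G, hG, hr⟩ := ih h
      exact ⟨G, subtreeAt_node_cons_eq_some.mpr ⟨hj, hG⟩, hr⟩

/-- A dependency path only ever enters first or last children. -/
lemma DescendsFromMiddleChild.not_depPath {F : FForest A} {b p : List ℕ}
    (h : DescendsFromMiddleChild F b p) : ¬ DepPath F p := by
  obtain ⟨i, q, l, hb, hi₁, hi₂, rfl⟩ := h
  intro hp
  obtain ⟨G, hG, hiq⟩ := hp.exists_subtreeAt_of_append
  obtain rfl : G = .node l := Option.some_injective _ (hG.symm.trans hb)
  cases hiq
  omega

lemma DescendsFromMiddleChild.isBasis {μ : A → M} {F : FForest A} (hF : Valid μ F)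
    {b p : List ℕ} (hb : DepPath F b) (h : DescendsFromMiddleChild F b p) : IsBasis μ F b := by
  obtain ⟨i, -, l, hs, hi₁, hi₂, -⟩ := h
  obtain ⟨e, he, hprod⟩ := (hF.subtreeAt hs).exists_idempotent (by omega)
  exact ⟨hb, l, e, hs, by omega, he, hprod⟩

lemma depPath_or_exists_descendsFromMiddleChild {F G : FForest A} {p : List ℕ}
    (hp : subtreeAt F p = some G) :
    DepPath F p ∨ ∃ b, DepPath F b ∧ DescendsFromMiddleChild F b p := by
  induction p generalizing F with
  | nil => exact .inl (.nil F)
  | cons j p ih =>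
    cases F with
    | leaf => simp [FForest.subtreeAt] at hp
    | node l =>
      obtain ⟨hj, hp⟩ := subtreeAt_node_cons_eq_some.mp hp
      by_cases hext : j = 0 ∨ j = l.length - 1
      · rcases ih hp with hdep | ⟨b, hb, i, q, l', hs, hi₁, hi₂, rfl⟩
        · exact .inl (.cons l j p hj hext hdep)
        · exact .inr ⟨j :: b, .cons l j b hj hext hb, i, q, l',
            subtreeAt_node_cons_eq_some.mpr ⟨hj, hs⟩, hi₁, hi₂, rfl⟩
      · exact .inr ⟨[], .nil _, j, p, l, subtreeAt_nil _, by omega, by omega, rfl⟩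

lemma IterPath.exists_descendsFromMiddleChild {F : FForest A} {p : List ℕ}
    (hp : IterPath F p) : ∃ b, DepPath F b ∧ DescendsFromMiddleChild F b p := by
  obtain ⟨q, i, l, rfl, hq, hi₁, hi₂⟩ := hp
  rcases depPath_or_exists_descendsFromMiddleChild hq with
    hdep | ⟨b, hb, j, r, l', hs, hj₁, hj₂, rfl⟩
  · exact ⟨q, hdep, i, [], l, hq, hi₁, hi₂, rfl⟩
  · exact ⟨b, hb, j, r ++ [i], l', hs, hj₁, hj₂, by simp⟩

lemma DescendsFromMiddleChild.prefix_of_depPath {F : FForest A} {b b' p : List ℕ}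
    (h : DescendsFromMiddleChild F b p) (hb' : DepPath F b') (hp : b' <+: p) : b' <+: b := by
  obtain ⟨i, q, l, hs, hi₁, hi₂, rfl⟩ := h
  have hdesc (t : List ℕ) : DescendsFromMiddleChild F b (b ++ [i] ++ t) :=
    ⟨i, t, l, hs, hi₁, hi₂, by simp⟩
  have hbi : b ++ [i] <+: b ++ i :: q := ⟨q, by simp⟩
  rcases List.prefix_or_prefix_of_prefix hp hbi with h | ⟨t, rfl⟩
  · rcases List.prefix_concat_iff.mp h with rfl | h
    · exact absurd (by simpa using hb') (hdesc []).not_depPath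
    · exact h
  · exact absurd hb' (hdesc t).not_depPath

lemma DescendsFromMiddleChild.eq_of_depPath {F : FForest A} {b b' p : List ℕ}
    (hb : DepPath F b) (hb' : DepPath F b') (h : DescendsFromMiddleChild F b p)
    (h' : DescendsFromMiddleChild F b' p) : b = b' := by
  have prefix_of {b b'} (hb : DepPath F b) (h : DescendsFromMiddleChild F b p)
      (h' : DescendsFromMiddleChild F b' p) : b <+: b' := by
    obtain ⟨i, q, -, -, -, -, rfl⟩ := h
    exact h'.prefix_of_depPath hb ⟨i :: q, rfl⟩
  have h₁ := prefix_of hb h h'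
  exact h₁.eq_of_length (le_antisymm h₁.length_le (prefix_of hb' h' h).length_le)

end FForest

theorem iterable_unique_basis {A M : Type} [Monoid M] (μ : A → M) (F : FForest A)
    (hF : FForest.Valid μ F) (p : List ℕ) (hp : FForest.IterPath F p) :
    ∃! b : List ℕ, FForest.IsBasis μ F b ∧
      ∃ (i : ℕ) (q : List ℕ) (l : List (FForest A)),
        FForest.subtreeAt F b = some (.node l) ∧ 1 ≤ i ∧ i + 2 ≤ l.length ∧
        p = b ++ i :: q := by
  obtain ⟨b, hb, hbp⟩ := hp.exists_descendsFromMiddleChild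
  refine ⟨b, ⟨hbp.isBasis hF hb, hbp⟩, ?_⟩
  rintro b' ⟨⟨hb', -⟩, hb'p⟩
  exact (hbp.eq_of_depPath hb hb' hb'p).symm
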